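/- arXiv:2502.00210 — 3 statements merged into one kernel-verified Lean document; each statement's English description precedes it below -/
import Mathlib

section
/- Let Ω ⊆ ℝ² be open, N ∈ ℕ, let φ : Ω → ℝ^N be C², let A, F : Ω → ℝ^N be continuous, and let X^u, X^v : Ω → ℝ be C¹. Suppose ∂_u∂_vφ = r⁻¹ D (∂_vφ − ∂_uφ) + D r⁻² A − D F on Ω, where r = r(u,v) and D = D(r(u,v)). Then at every point of Ω the multiplier identity holds: ∂_v( r² X^u |∂_uφ|² ) + ∂_u( r² X^v |∂_vφ|² ) = r² (∂_v X^u) |∂_uφ|² + r² (∂_u X^v) |∂_vφ|² + 2 r D (X^u − X^v) ⟨∂_uφ, ∂_vφ⟩ + 2 D X^u ⟨A, ∂_uφ⟩ + 2 D X^v ⟨A, ∂_vφ⟩ − 2 r² D ⟨X^u ∂_uφ + X^v ∂_vφ, F⟩, where |·| and ⟨·,·⟩ denote the Euclidean norm and inner product on ℝ^N. -/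
open Real Filter Set
open scoped RealInnerProductSpace

/-- The metric coefficient `D(r) = (1 - M/r)^2` of extremal Reissner–Nordström. -/
noncomputable def Dcoef (M r : ℝ) : ℝ := (1 - M / r) ^ 2

/-- The tortoise coordinate `r_*(r) = r - M - M^2/(r-M) + 2 M log((r-M)/M)`. -/
noncomputable def rstar (M r : ℝ) : ℝ :=
  r - M - M ^ 2 / (r - M) + 2 * M * Real.log ((r - M) / M)

/-- The area-radius function `r(u,v) = R(v - u + c)` in double null coordinates. -/
noncomputable def areaRadius (R : ℝ → ℝ) (c : ℝ) (q : ℝ × ℝ) : ℝ := R (q.2 - q.1 + c)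

/-- Partial derivative in the first (`u`) variable. -/
noncomputable def pdu {E : Type*} [NormedAddCommGroup E] [NormedSpace ℝ E]
    (f : ℝ × ℝ → E) (p : ℝ × ℝ) : E := fderiv ℝ f p (1, 0)

/-- Partial derivative in the second (`v`) variable. -/
noncomputable def pdv {E : Type*} [NormedAddCommGroup E] [NormedSpace ℝ E]
    (f : ℝ × ℝ → E) (p : ℝ × ℝ) : E := fderiv ℝ f p (0, 1)

/-!
Both sides are computed by the product rule. Since `r_*' = 1/D`, the inverse function theorem
gives `∂_v r = D` and `∂_u r = -D`; the mixed partials of the `C²` field `φ` commute, so both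
`∂_v|∂_uφ|²` and `∂_u|∂_vφ|²` bring in `∂_u∂_vφ`, which the equation replaces. The `r⁻¹D(∂_vφ - ∂_uφ)`
part of the equation then cancels the terms produced by differentiating `r²`, up to the cross term
`2rD(Xᵘ - Xᵛ)⟨∂_uφ, ∂_vφ⟩`.
-/

lemma Dcoef_pos {M r : ℝ} (hM : 0 < M) (hr : M < r) : 0 < Dcoef M r := by
  have : M / r < 1 := (div_lt_one (hM.trans hr)).2 hr
  exact pow_pos (by linarith) 2

lemma hasDerivAt_rstar {M r : ℝ} (hM : 0 < M) (hr : M < r) :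
    HasDerivAt (rstar M) (Dcoef M r)⁻¹ r := by
  have hrM : r - M ≠ 0 := by linarith
  have hr0 : r ≠ 0 := by linarith
  have hlin : HasDerivAt (fun x : ℝ => x - M) 1 r := (hasDerivAt_id r).sub_const M
  have hlog : HasDerivAt (fun x : ℝ => Real.log ((x - M) / M)) ((r - M)⁻¹) r := by
    convert (hlin.div_const M).log (div_ne_zero hrM hM.ne') using 1
    field_simp
  refine ((hlin.sub ((hasDerivAt_const r (M ^ 2)).div hlin hrM)).add
    (hlog.const_mul (2 * M))).congr_deriv ?_
  unfold Dcoef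
  have : 1 - M / r ≠ 0 := (sub_pos.2 ((div_lt_one (by linarith)).2 hr)).ne'
  field_simp
  ring

lemma hasDerivAt_rstar_rightInverse {M : ℝ} (hM : 0 < M) {R : ℝ → ℝ}
    (hRmem : ∀ s, R s ∈ Ioi M) (hRleft : ∀ s, rstar M (R s) = s)
    (hRright : ∀ ρ ∈ Ioi M, R (rstar M ρ) = ρ) (s : ℝ) :
    HasDerivAt R (Dcoef M (R s)) s := by
  have hmono : StrictMonoOn (rstar M) (Ioi M) := by
    apply strictMonoOn_of_deriv_pos (convex_Ioi M)
    · exact fun x hx => (hasDerivAt_rstar hM hx).continuousAt.continuousWithinAt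
    · intro x hx
      rw [interior_Ioi] at hx
      rw [(hasDerivAt_rstar hM hx).deriv]
      exact inv_pos.2 (Dcoef_pos hM hx)
  have hRmono : StrictMono R := fun a b hab =>
    (hmono.lt_iff_lt (hRmem a) (hRmem b)).mp (by rwa [hRleft, hRleft])
  have hrange : range R = Ioi M :=
    (range_subset_iff.2 hRmem).antisymm fun ρ hρ => ⟨rstar M ρ, hRright ρ hρ⟩
  have hcont : ContinuousAt R s := by
    apply (hRmono.strictMonoOn univ).continuousAt_of_image_mem_nhds univ_mem
    rw [image_univ, hrange]
    exact isOpen_Ioi.mem_nhds (hRmem s)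
  simpa using (hasDerivAt_rstar hM (hRmem s)).of_local_left_inverse hcont
    (inv_ne_zero (Dcoef_pos hM (hRmem s)).ne') (Eventually.of_forall hRleft)

section
variable {R : ℝ → ℝ} {c d : ℝ} {p : ℝ × ℝ}

lemma hasFDerivAt_areaRadius (hR : HasDerivAt R d (p.2 - p.1 + c)) :
    HasFDerivAt (areaRadius R c)
      (d • (ContinuousLinearMap.snd ℝ ℝ ℝ - ContinuousLinearMap.fst ℝ ℝ ℝ)) p :=
  hR.comp_hasFDerivAt p ((hasFDerivAt_snd.sub hasFDerivAt_fst).add_const c)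

lemma pdu_areaRadius (hR : HasDerivAt R d (p.2 - p.1 + c)) : pdu (areaRadius R c) p = -d := by
  simp [pdu, (hasFDerivAt_areaRadius hR).fderiv]

lemma pdv_areaRadius (hR : HasDerivAt R d (p.2 - p.1 + c)) : pdv (areaRadius R c) p = d := by
  simp [pdv, (hasFDerivAt_areaRadius hR).fderiv]

end

section
variable {G E : Type*} [NormedAddCommGroup G] [NormedSpace ℝ G]
  [NormedAddCommGroup E] [InnerProductSpace ℝ E]

lemma fderiv_sq_mul_mul_norm_sq_apply {r X : G → ℝ} {g : G → E} {p : G}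
    (hr : DifferentiableAt ℝ r p) (hX : DifferentiableAt ℝ X p) (hg : DifferentiableAt ℝ g p)
    (w : G) :
    fderiv ℝ (fun q => r q ^ 2 * X q * ‖g q‖ ^ 2) p w =
      (2 * r p * fderiv ℝ r p w * X p + r p ^ 2 * fderiv ℝ X p w) * ‖g p‖ ^ 2 +
        2 * r p ^ 2 * X p * ⟪g p, fderiv ℝ g p w⟫ := by
  rw [(((hr.hasFDerivAt.pow 2).fun_mul hX.hasFDerivAt).fun_mul hg.hasFDerivAt.norm_sq).fderiv]
  simp
  ring

end

section
variable {G E : Type*} [NormedAddCommGroup G] [NormedSpace ℝ G]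
  [NormedAddCommGroup E] [NormedSpace ℝ E]

lemma fderiv_fderiv_apply_const {φ : G → E} {p : G} (h : DifferentiableAt ℝ (fderiv ℝ φ) p)
    (v w : G) : fderiv ℝ (fun q => fderiv ℝ φ q w) p v = fderiv ℝ (fderiv ℝ φ) p v w := by
  rw [fderiv_clm_apply h (differentiableAt_const w)]
  simp

lemma pdv_pdu_comm {φ : ℝ × ℝ → E} {p : ℝ × ℝ} (hφ : ContDiffAt ℝ 2 φ p) :
    pdv (pdu φ) p = pdu (pdv φ) p := by
  have h : DifferentiableAt ℝ (fderiv ℝ φ) p :=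
    (hφ.fderiv_right (m := 1) (by norm_num)).differentiableAt one_ne_zero
  calc pdv (pdu φ) p = fderiv ℝ (fderiv ℝ φ) p (0, 1) (1, 0) := fderiv_fderiv_apply_const h _ _
    _ = fderiv ℝ (fderiv ℝ φ) p (1, 0) (0, 1) := hφ.isSymmSndFDerivAt (by simp) _ _
    _ = pdu (pdv φ) p := (fderiv_fderiv_apply_const h _ _).symm

end

lemma multiplier_identity_pointwise {E : Type*} [NormedAddCommGroup E] [InnerProductSpace ℝ E]
    {r D Xu Xv dXu dXv : ℝ} {a b A F W : E} (hr : r ≠ 0)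
    (hW : W = (D / r) • (b - a) + (D / r ^ 2) • A - D • F) :
    (2 * r * D * Xu + r ^ 2 * dXu) * ‖a‖ ^ 2 + 2 * r ^ 2 * Xu * ⟪a, W⟫ +
        ((2 * r * -D * Xv + r ^ 2 * dXv) * ‖b‖ ^ 2 + 2 * r ^ 2 * Xv * ⟪b, W⟫) =
      r ^ 2 * dXu * ‖a‖ ^ 2 + r ^ 2 * dXv * ‖b‖ ^ 2 + 2 * r * D * (Xu - Xv) * ⟪a, b⟫ +
        2 * D * Xu * ⟪A, a⟫ + 2 * D * Xv * ⟪A, b⟫ - 2 * r ^ 2 * D * ⟪Xu • a + Xv • b, F⟫ := by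
  subst hW
  simp only [inner_add_left, inner_add_right, inner_sub_right, real_inner_smul_left,
    real_inner_smul_right, real_inner_self_eq_norm_sq, real_inner_comm A, real_inner_comm b a]
  field_simp
  ring

theorem stmt6_general (M : ℝ) (hM : 0 < M) (c : ℝ) (R : ℝ → ℝ)
    (hRmem : ∀ s, R s ∈ Set.Ioi M)
    (hRleft : ∀ s, rstar M (R s) = s)
    (hRright : ∀ ρ ∈ Set.Ioi M, R (rstar M ρ) = ρ)
    (N : ℕ) (Ω : Set (ℝ × ℝ)) (hΩ : IsOpen Ω)
    (φ A F : ℝ × ℝ → EuclideanSpace ℝ (Fin N)) (Xu Xv : ℝ × ℝ → ℝ)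
    (hφ : ContDiffOn ℝ 2 φ Ω)
    (hXu : ContDiffOn ℝ 1 Xu Ω) (hXv : ContDiffOn ℝ 1 Xv Ω)
    (heq : ∀ p ∈ Ω,
      pdu (pdv φ) p =
        (Dcoef M (areaRadius R c p) / areaRadius R c p) • (pdv φ p - pdu φ p) +
          (Dcoef M (areaRadius R c p) / (areaRadius R c p) ^ 2) • A p -
          Dcoef M (areaRadius R c p) • F p) :
    ∀ p ∈ Ω,
      pdv (fun q => (areaRadius R c q) ^ 2 * Xu q * ‖pdu φ q‖ ^ 2) p +
        pdu (fun q => (areaRadius R c q) ^ 2 * Xv q * ‖pdv φ q‖ ^ 2) p =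
      (areaRadius R c p) ^ 2 * pdv Xu p * ‖pdu φ p‖ ^ 2 +
        (areaRadius R c p) ^ 2 * pdu Xv p * ‖pdv φ p‖ ^ 2 +
        2 * areaRadius R c p * Dcoef M (areaRadius R c p) * (Xu p - Xv p) *
          ⟪pdu φ p, pdv φ p⟫ +
        2 * Dcoef M (areaRadius R c p) * Xu p * ⟪A p, pdu φ p⟫ +
        2 * Dcoef M (areaRadius R c p) * Xv p * ⟪A p, pdv φ p⟫ -
        2 * (areaRadius R c p) ^ 2 * Dcoef M (areaRadius R c p) *
          ⟪Xu p • pdu φ p + Xv p • pdv φ p, F p⟫ := by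
  intro p hp
  have hΩp := hΩ.mem_nhds hp
  have hR := hasDerivAt_rstar_rightInverse hM hRmem hRleft hRright (p.2 - p.1 + c)
  have hr := (hasFDerivAt_areaRadius hR).differentiableAt
  have hφ2 : ContDiffAt ℝ 2 φ p := hφ.contDiffAt hΩp
  have hdφ : DifferentiableAt ℝ (fderiv ℝ φ) p :=
    (hφ2.fderiv_right (m := 1) (by norm_num)).differentiableAt one_ne_zero
  have hXu' := (hXu.contDiffAt hΩp).differentiableAt one_ne_zero
  have hXv' := (hXv.contDiffAt hΩp).differentiableAt one_ne_zero
  have hv : pdv (fun q => (areaRadius R c q) ^ 2 * Xu q * ‖pdu φ q‖ ^ 2) p = _ :=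
    fderiv_sq_mul_mul_norm_sq_apply hr hXu' (hdφ.clm_apply (differentiableAt_const _)) (0, 1)
  have hu : pdu (fun q => (areaRadius R c q) ^ 2 * Xv q * ‖pdv φ q‖ ^ 2) p = _ :=
    fderiv_sq_mul_mul_norm_sq_apply hr hXv' (hdφ.clm_apply (differentiableAt_const _)) (1, 0)
  rw [hv, hu]
  change (_ * pdv (areaRadius R c) p * _ + _) * _ + _ * ⟪_, pdv (pdu φ) p⟫ +
    ((_ * pdu (areaRadius R c) p * _ + _) * _ + _ * ⟪_, pdu (pdv φ) p⟫) = _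
  rw [pdv_areaRadius hR, pdu_areaRadius hR, pdv_pdu_comm hφ2]
  exact multiplier_identity_pointwise (hM.trans (hRmem _)).ne' (heq p hp)

/-- The general multiplier identity (2.9) for a multiplier `X = Xᵘ∂_u + Xᵛ∂_v`, for solutions of
`∂_u∂_vφ = r⁻¹D(∂_vφ - ∂_uφ) + D r⁻² A - D F` on an open set `Ω ⊆ ℝ²`. -/
theorem stmt6 (M : ℝ) (hM : 0 < M) (c : ℝ) (R : ℝ → ℝ)
    (hRmem : ∀ s, R s ∈ Set.Ioi M)
    (hRleft : ∀ s, rstar M (R s) = s)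
    (hRright : ∀ ρ ∈ Set.Ioi M, R (rstar M ρ) = ρ)
    (N : ℕ) (Ω : Set (ℝ × ℝ)) (hΩ : IsOpen Ω)
    (φ A F : ℝ × ℝ → EuclideanSpace ℝ (Fin N)) (Xu Xv : ℝ × ℝ → ℝ)
    (hφ : ContDiffOn ℝ 2 φ Ω) (hA : ContinuousOn A Ω) (hF : ContinuousOn F Ω)
    (hXu : ContDiffOn ℝ 1 Xu Ω) (hXv : ContDiffOn ℝ 1 Xv Ω)
    (heq : ∀ p ∈ Ω,
      pdu (pdv φ) p =
        (Dcoef M (areaRadius R c p) / areaRadius R c p) • (pdv φ p - pdu φ p) +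
          (Dcoef M (areaRadius R c p) / (areaRadius R c p) ^ 2) • A p -
          Dcoef M (areaRadius R c p) • F p) :
    ∀ p ∈ Ω,
      pdv (fun q => (areaRadius R c q) ^ 2 * Xu q * ‖pdu φ q‖ ^ 2) p +
        pdu (fun q => (areaRadius R c q) ^ 2 * Xv q * ‖pdv φ q‖ ^ 2) p =
      (areaRadius R c p) ^ 2 * pdv Xu p * ‖pdu φ p‖ ^ 2 +
        (areaRadius R c p) ^ 2 * pdu Xv p * ‖pdv φ p‖ ^ 2 +
        2 * areaRadius R c p * Dcoef M (areaRadius R c p) * (Xu p - Xv p) *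
          ⟪pdu φ p, pdv φ p⟫ +
        2 * Dcoef M (areaRadius R c p) * Xu p * ⟪A p, pdu φ p⟫ +
        2 * Dcoef M (areaRadius R c p) * Xv p * ⟪A p, pdv φ p⟫ -
        2 * (areaRadius R c p) ^ 2 * Dcoef M (areaRadius R c p) *
          ⟪Xu p • pdu φ p + Xv p • pdv φ p, F p⟫ :=
  stmt6_general M hM c R hRmem hRleft hRright N Ω hΩ φ A F Xu Xv hφ hXu hXv heq
end

section
/- Let Λ > 0. There exists a constant C > 0, depending only on Λ, such that for every p ∈ [−1, 1) and every C¹ function φ : [Λ, ∞) → ℝ with lim inf_{r→∞} r^{p−1} (r·φ(r))² = 0, writing ψ(r) := r·φ(r), one has (1 − p)² · ∫_Λ^∞ r^p φ(r)² dr ≤ C · ( ∫_Λ^∞ r^p ψ'(r)² dr + ∫_Λ^{2Λ} φ(r)² dr ), where the inequality is understood in [0, ∞]. -/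
/-!
With `ψ = r φ` one has `(r ^ (p - 1) ψ²)' = -(1 - p) r ^ p φ² + 2 r ^ p φ ψ'`, and completing the
square gives `(1 - p)² r ^ p φ² ≤ 4 r ^ p ψ'² - 2 (1 - p) (r ^ (p - 1) ψ²)'`. Integrating over
`[Λ, R]` and dropping the boundary term at `R`, which is nonpositive for `p ≤ 1`, bounds
`(1 - p)² ∫ r ^ p φ²` by `4 ∫ r ^ p ψ'² + 2 (1 - p) Λ ^ (p - 1) ψ(Λ)²`. Integrating
`((r - 2Λ) ψ²)'` over `[Λ, 2Λ]` controls `ψ(Λ)²` by the `L²` norms of `ψ` and `ψ'` there, and on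
`[Λ, 2Λ]` the weight `r ^ p` is comparable to `1` uniformly in `p ∈ [-1, 1]`. Letting `R → ∞` is
monotone convergence.
-/

open Real Filter Set MeasureTheory

theorem rpow_le_max_of_mem_Icc {x s t q : ℝ} (hx : 0 < x) (hq : q ∈ Icc s t) :
    x ^ q ≤ max (x ^ s) (x ^ t) := by
  rcases le_total 1 x with h | h
  · exact (rpow_le_rpow_of_exponent_le h hq.2).trans (le_max_right _ _)
  · exact (rpow_le_rpow_of_exponent_ge hx h hq.1).trans (le_max_left _ _)

theorem ContDiffOn.hasDerivAt_derivWithin_Ici {f : ℝ → ℝ} {a x : ℝ}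
    (hf : ContDiffOn ℝ 1 f (Ici a)) (hx : a < x) : HasDerivAt f (derivWithin f (Ici a) x) x := by
  have hmem : Ici a ∈ nhds x := Ici_mem_nhds hx
  rw [derivWithin_of_mem_nhds hmem]
  exact (hf.differentiableOn one_ne_zero).hasDerivAt hmem

theorem iUnion_Ioc_add_natCast (a b : ℝ) : ⋃ n : ℕ, Ioc a (b + n) = Ioi a := by
  ext x
  simp only [mem_iUnion, mem_Ioc, mem_Ioi]
  refine ⟨fun ⟨_, hx, _⟩ => hx, fun hx => ?_⟩
  obtain ⟨n, hn⟩ := exists_nat_ge (x - b)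
  exact ⟨n, hx, by linarith⟩

theorem setLIntegral_Ioi_eq_iSup_Ioc_add_natCast (f : ℝ → ENNReal) (a b : ℝ) :
    ∫⁻ x in Ioi a, f x = ⨆ n : ℕ, ∫⁻ x in Ioc a (b + n), f x := by
  rw [← iUnion_Ioc_add_natCast a b]
  refine setLIntegral_iUnion_of_directed f (Monotone.directed_le fun m n hmn => ?_)
  exact Ioc_subset_Ioc_right (by gcongr)

theorem ofReal_intervalIntegral_eq_setLIntegral {f : ℝ → ℝ} {a b : ℝ} (hab : a ≤ b)
    (hf : IntervalIntegrable f volume a b) (hf0 : ∀ x ∈ Ioc a b, 0 ≤ f x) :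
    ENNReal.ofReal (∫ x in a..b, f x) = ∫⁻ x in Ioc a b, ENNReal.ofReal (f x) := by
  rw [intervalIntegral.integral_of_le hab, ofReal_integral_eq_lintegral_ofReal hf.1
    ((ae_restrict_iff' measurableSet_Ioc).2 (ae_of_all _ hf0))]

theorem mul_sq_le_intervalIntegral_sq_add_sq_deriv {ψ ψ' : ℝ → ℝ} {a b : ℝ} (hab : a ≤ b)
    (hψ : ContinuousOn ψ (Icc a b)) (hψ' : ContinuousOn ψ' (Icc a b))
    (hderiv : ∀ x ∈ Ioo a b, HasDerivAt ψ (ψ' x) x) :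
    (b - a) * ψ a ^ 2 ≤ ∫ x in a..b, ((1 + (b - a)) * ψ x ^ 2 + (b - a) * ψ' x ^ 2) := by
  have hg : ∀ x ∈ Ioo a b,
      HasDerivAt (fun x => (x - b) * ψ x ^ 2) (ψ x ^ 2 + 2 * (x - b) * ψ x * ψ' x) x := by
    intro x hx
    refine (((hasDerivAt_id' x).sub_const b).fun_mul ((hderiv x hx).fun_pow 2)).congr_deriv ?_
    norm_num
    ring
  -- `(b - x)(ψ + ψ')² + (x - a)(ψ² + ψ'²) ≥ 0` absorbs the cross term
  have key := intervalIntegral.sub_le_integral_of_hasDeriv_right_of_le hab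
    (g := fun x => (x - b) * ψ x ^ 2) (φ := fun x => (1 + (b - a)) * ψ x ^ 2 + (b - a) * ψ' x ^ 2)
    ((continuousOn_id.sub continuousOn_const).mul (hψ.pow 2))
    (fun x hx => (hg x hx).hasDerivWithinAt)
    (ContinuousOn.integrableOn_Icc (μ := volume)
      ((continuousOn_const.mul (hψ.pow 2)).add (continuousOn_const.mul (hψ'.pow 2))))
    (fun x hx => by
      nlinarith [mul_nonneg (sub_nonneg.2 hx.2.le) (sq_nonneg (ψ x + ψ' x)),
        mul_nonneg (sub_nonneg.2 hx.1.le) (add_nonneg (sq_nonneg (ψ x)) (sq_nonneg (ψ' x)))])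
  simp only [sub_self, zero_mul, zero_sub] at key
  linarith

theorem hasDerivAt_rpow_sub_one_mul_sq {φ : ℝ → ℝ} {ψ' p x : ℝ} (hx : 0 < x)
    (hψ : HasDerivAt (fun r => r * φ r) ψ' x) :
    HasDerivAt (fun r => r ^ (p - 1) * (r * φ r) ^ 2)
      (x ^ p * φ x * ((p - 1) * φ x + 2 * ψ')) x := by
  refine ((hasDerivAt_rpow_const (p := p - 1) (Or.inl hx.ne')).mul (hψ.fun_pow 2)).congr_deriv ?_
  rw [rpow_sub_one hx.ne', rpow_sub_one hx.ne']
  field_simp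
  ring

theorem hardy_intervalIntegral_le {φ ψ' : ℝ → ℝ} {a b p : ℝ} (ha : 0 < a) (hab : a ≤ b)
    (hp : p ≤ 1) (hφ : ContinuousOn φ (Icc a b)) (hψ' : ContinuousOn ψ' (Icc a b))
    (hderiv : ∀ x ∈ Ioo a b, HasDerivAt (fun r => r * φ r) (ψ' x) x) :
    (1 - p) ^ 2 * ∫ r in a..b, r ^ p * φ r ^ 2 ≤
      2 * (1 - p) * (a ^ (p - 1) * (a * φ a) ^ 2) + 4 * ∫ r in a..b, r ^ p * ψ' r ^ 2 := by
  have hpow : ∀ q : ℝ, ContinuousOn (fun r : ℝ => r ^ q) (Icc a b) := fun q =>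
    continuousOn_id.rpow_const fun r hr => Or.inl (ha.trans_le hr.1).ne'
  have hφ2c : ContinuousOn (fun r => r ^ p * φ r ^ 2) (Icc a b) := (hpow p).mul (hφ.pow 2)
  have hψ'2c : ContinuousOn (fun r => r ^ p * ψ' r ^ 2) (Icc a b) := (hpow p).mul (hψ'.pow 2)
  have hφ2 : IntervalIntegrable _ volume a b := hφ2c.intervalIntegrable_of_Icc hab
  have hψ'2 : IntervalIntegrable _ volume a b := hψ'2c.intervalIntegrable_of_Icc hab
  have key := intervalIntegral.integral_le_sub_of_hasDeriv_right_of_le hab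
    (g := fun r => -(2 * (1 - p)) * (r ^ (p - 1) * (r * φ r) ^ 2))
    (φ := fun r => (1 - p) ^ 2 * (r ^ p * φ r ^ 2) - 4 * (r ^ p * ψ' r ^ 2))
    (continuousOn_const.mul ((hpow _).mul ((continuousOn_id.mul hφ).pow 2)))
    (fun x hx => ((hasDerivAt_rpow_sub_one_mul_sq (ha.trans hx.1) (hderiv x hx)).const_mul
      _).hasDerivWithinAt)
    (ContinuousOn.integrableOn_Icc (μ := volume)
      ((continuousOn_const.mul hφ2c).sub (continuousOn_const.mul hψ'2c)))
    (fun x hx => by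
      nlinarith [mul_nonneg (rpow_nonneg (ha.trans hx.1).le p)
        (sq_nonneg ((1 - p) * φ x - 2 * ψ' x))])
  rw [intervalIntegral.integral_sub (hφ2.const_mul _) (hψ'2.const_mul _),
    intervalIntegral.integral_const_mul, intervalIntegral.integral_const_mul] at key
  have hb : 0 ≤ (1 - p) * (b ^ (p - 1) * (b * φ b) ^ 2) :=
    mul_nonneg (sub_nonneg.2 hp) (mul_nonneg (rpow_nonneg (ha.le.trans hab) _) (sq_nonneg _))
  linarith

theorem sq_mul_le_intervalIntegral_two_mul {φ ψ' : ℝ → ℝ} {Λ p : ℝ} (hΛ : 0 < Λ)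
    (hp : p ∈ Icc (-1 : ℝ) 1) (hφ : ContinuousOn φ (Icc Λ (2 * Λ)))
    (hψ' : ContinuousOn ψ' (Icc Λ (2 * Λ)))
    (hderiv : ∀ x ∈ Ioo Λ (2 * Λ), HasDerivAt (fun r => r * φ r) (ψ' x) x) :
    (Λ * φ Λ) ^ 2 ≤ 4 * Λ * (1 + Λ) * (∫ r in Λ..2 * Λ, φ r ^ 2) +
      max Λ⁻¹ (2 * Λ) * ∫ r in Λ..2 * Λ, r ^ p * ψ' r ^ 2 := by
  have hΛ2 : Λ ≤ 2 * Λ := by linarith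
  have htrace := mul_sq_le_intervalIntegral_sq_add_sq_deriv (ψ := fun r => r * φ r) hΛ2
    (continuousOn_id.mul hφ) hψ' hderiv
  rw [show 2 * Λ - Λ = Λ by ring] at htrace
  have hpow : ContinuousOn (fun r : ℝ => r ^ p) (Icc Λ (2 * Λ)) :=
    continuousOn_id.rpow_const fun r hr => Or.inl (hΛ.trans_le hr.1).ne'
  have hpt : ∀ r ∈ Icc Λ (2 * Λ), (1 + Λ) * (r * φ r) ^ 2 + Λ * ψ' r ^ 2 ≤
      Λ * (4 * Λ * (1 + Λ) * φ r ^ 2 + max Λ⁻¹ (2 * Λ) * (r ^ p * ψ' r ^ 2)) := by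
    intro r hr
    have hr0 : 0 < r := hΛ.trans_le hr.1
    have hweight : r ^ (-p) ≤ max Λ⁻¹ (2 * Λ) :=
      calc r ^ (-p) ≤ max (r ^ (-1 : ℝ)) (r ^ (1 : ℝ)) :=
            rpow_le_max_of_mem_Icc hr0 ⟨by linarith [hp.2], by linarith [hp.1]⟩
        _ ≤ max Λ⁻¹ (2 * Λ) := by
            rw [rpow_neg_one, rpow_one]
            exact max_le_max (inv_anti₀ hΛ hr.1) hr.2
    have hsplit : ψ' r ^ 2 = r ^ (-p) * (r ^ p * ψ' r ^ 2) := by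
      rw [rpow_neg hr0.le, inv_mul_cancel_left₀ (rpow_pos_of_pos hr0 p).ne']
    have hr2 : r ^ 2 ≤ 4 * Λ ^ 2 := by nlinarith [hr.1, hr.2]
    calc (1 + Λ) * (r * φ r) ^ 2 + Λ * ψ' r ^ 2
        = (1 + Λ) * r ^ 2 * φ r ^ 2 + Λ * (r ^ (-p) * (r ^ p * ψ' r ^ 2)) := by
          rw [← hsplit]; ring
      _ ≤ (1 + Λ) * (4 * Λ ^ 2) * φ r ^ 2 + Λ * (max Λ⁻¹ (2 * Λ) * (r ^ p * ψ' r ^ 2)) := by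
          gcongr
      _ = Λ * (4 * Λ * (1 + Λ) * φ r ^ 2 + max Λ⁻¹ (2 * Λ) * (r ^ p * ψ' r ^ 2)) := by ring
  have hlhs : ContinuousOn (fun r => (1 + Λ) * (r * φ r) ^ 2 + Λ * ψ' r ^ 2) (Icc Λ (2 * Λ)) := by
    fun_prop
  have hrhs : ContinuousOn
      (fun r => 4 * Λ * (1 + Λ) * φ r ^ 2 + max Λ⁻¹ (2 * Λ) * (r ^ p * ψ' r ^ 2))
      (Icc Λ (2 * Λ)) := by
    fun_prop
  have hmono := intervalIntegral.integral_mono_on hΛ2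
    (hlhs.intervalIntegrable_of_Icc (μ := volume) hΛ2)
    ((hrhs.intervalIntegrable_of_Icc hΛ2).const_mul Λ) hpt
  have hφ2 : IntervalIntegrable (fun r => φ r ^ 2) volume Λ (2 * Λ) :=
    (hφ.pow 2).intervalIntegrable_of_Icc hΛ2
  have hψ'2 : IntervalIntegrable (fun r => r ^ p * ψ' r ^ 2) volume Λ (2 * Λ) :=
    (hpow.mul (hψ'.pow 2)).intervalIntegrable_of_Icc hΛ2
  rw [intervalIntegral.integral_const_mul, intervalIntegral.integral_add (hφ2.const_mul _)
    (hψ'2.const_mul _), intervalIntegral.integral_const_mul,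
    intervalIntegral.integral_const_mul] at hmono
  exact le_of_mul_le_mul_left (htrace.trans hmono) hΛ

/-- `max (Λ ^ (-2)) 1` bounds `Λ ^ (p - 1)`; `4 Λ (1 + Λ)` and `max Λ⁻¹ (2 Λ)` come from
`sq_mul_le_intervalIntegral_two_mul`. -/
noncomputable def hardyFarConst (Λ : ℝ) : ℝ :=
  4 * (max (Λ ^ (-2 : ℝ)) 1 * (4 * Λ * (1 + Λ) + max Λ⁻¹ (2 * Λ)) + 1)

theorem hardyFarConst_pos {Λ : ℝ} (hΛ : 0 < Λ) : 0 < hardyFarConst Λ := by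
  unfold hardyFarConst
  positivity

theorem hardy_far_intervalIntegral_le {φ ψ' : ℝ → ℝ} {Λ p R : ℝ} (hΛ : 0 < Λ)
    (hp : p ∈ Icc (-1 : ℝ) 1) (hR : 2 * Λ ≤ R) (hφ : ContinuousOn φ (Icc Λ R))
    (hψ' : ContinuousOn ψ' (Icc Λ R))
    (hderiv : ∀ x ∈ Ioo Λ R, HasDerivAt (fun r => r * φ r) (ψ' x) x) :
    (1 - p) ^ 2 * ∫ r in Λ..R, r ^ p * φ r ^ 2 ≤
      hardyFarConst Λ * ((∫ r in Λ..R, r ^ p * ψ' r ^ 2) + ∫ r in Λ..2 * Λ, φ r ^ 2) := by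
  have hΛ2 : Λ ≤ 2 * Λ := by linarith
  have hsub : Icc Λ (2 * Λ) ⊆ Icc Λ R := Icc_subset_Icc_right hR
  have hhardy := hardy_intervalIntegral_le hΛ (hΛ2.trans hR) hp.2 hφ hψ' hderiv
  have hbdry := sq_mul_le_intervalIntegral_two_mul hΛ hp (hφ.mono hsub) (hψ'.mono hsub)
    fun x hx => hderiv x ⟨hx.1, hx.2.trans_le hR⟩
  have hK : Λ ^ (p - 1) ≤ max (Λ ^ (-2 : ℝ)) 1 := by
    simpa using rpow_le_max_of_mem_Icc hΛ (⟨by linarith [hp.1], by linarith [hp.2]⟩ :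
      p - 1 ∈ Icc (-2 : ℝ) 0)
  have hweight : ∀ r, Λ ≤ r → 0 ≤ r ^ p * ψ' r ^ 2 := fun r hr =>
    mul_nonneg (rpow_nonneg (hΛ.le.trans hr) p) (sq_nonneg _)
  have hJ : ∫ r in Λ..2 * Λ, r ^ p * ψ' r ^ 2 ≤ ∫ r in Λ..R, r ^ p * ψ' r ^ 2 :=
    intervalIntegral.integral_mono_interval le_rfl hΛ2 hR
      ((ae_restrict_iff' measurableSet_Ioc).2 (ae_of_all _ fun r hr => hweight r hr.1.le))
      (((continuousOn_id.rpow_const fun r hr => Or.inl (hΛ.trans_le hr.1).ne').mul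
        (hψ'.pow 2)).intervalIntegrable_of_Icc (hΛ2.trans hR))
  have hJ0 : 0 ≤ ∫ r in Λ..R, r ^ p * ψ' r ^ 2 :=
    intervalIntegral.integral_nonneg (hΛ2.trans hR) fun r hr => hweight r hr.1
  have hI0 : 0 ≤ ∫ r in Λ..2 * Λ, φ r ^ 2 :=
    intervalIntegral.integral_nonneg hΛ2 fun r _ => sq_nonneg _
  calc (1 - p) ^ 2 * ∫ r in Λ..R, r ^ p * φ r ^ 2
      ≤ 2 * (1 - p) * (Λ ^ (p - 1) * (Λ * φ Λ) ^ 2) + 4 * ∫ r in Λ..R, r ^ p * ψ' r ^ 2 := hhardy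
    _ ≤ 4 * (max (Λ ^ (-2 : ℝ)) 1 * (4 * Λ * (1 + Λ) * (∫ r in Λ..2 * Λ, φ r ^ 2) +
          max Λ⁻¹ (2 * Λ) * ∫ r in Λ..R, r ^ p * ψ' r ^ 2)) +
        4 * ∫ r in Λ..R, r ^ p * ψ' r ^ 2 := by
      gcongr
      · linarith [hp.1]
      · exact hbdry.trans (by gcongr)
    _ ≤ hardyFarConst Λ * ((∫ r in Λ..R, r ^ p * ψ' r ^ 2) + ∫ r in Λ..2 * Λ, φ r ^ 2) := by
      unfold hardyFarConst
      have hK0 : 0 ≤ max (Λ ^ (-2 : ℝ)) 1 := le_max_of_le_right zero_le_one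
      nlinarith [mul_nonneg (mul_nonneg hK0 (by positivity : 0 ≤ 4 * Λ * (1 + Λ))) hJ0,
        mul_nonneg (mul_nonneg hK0 (by positivity : 0 ≤ max Λ⁻¹ (2 * Λ))) hI0]

theorem hardy_far_lintegral_le {φ ψ' : ℝ → ℝ} {Λ p : ℝ} (hΛ : 0 < Λ) (hp : p ∈ Icc (-1 : ℝ) 1)
    (hφ : ContinuousOn φ (Ici Λ)) (hψ' : ContinuousOn ψ' (Ici Λ))
    (hderiv : ∀ x ∈ Ioi Λ, HasDerivAt (fun r => r * φ r) (ψ' x) x) :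
    ENNReal.ofReal ((1 - p) ^ 2) * ∫⁻ r in Ioi Λ, ENNReal.ofReal (r ^ p * φ r ^ 2) ≤
      ENNReal.ofReal (hardyFarConst Λ) *
        ((∫⁻ r in Ioi Λ, ENNReal.ofReal (r ^ p * ψ' r ^ 2)) +
          ∫⁻ r in Ioc Λ (2 * Λ), ENNReal.ofReal (φ r ^ 2)) := by
  have hpow : ContinuousOn (fun r : ℝ => r ^ p) (Ici Λ) :=
    continuousOn_id.rpow_const fun r hr => Or.inl (hΛ.trans_le hr).ne'
  have hweight : ∀ r ∈ Ici Λ, 0 ≤ r ^ p := fun r hr => rpow_nonneg (hΛ.le.trans hr) p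
  have hofReal : ∀ {f : ℝ → ℝ} {b : ℝ}, Λ ≤ b → ContinuousOn f (Ici Λ) →
      (∀ r ∈ Ici Λ, 0 ≤ f r) →
      ENNReal.ofReal (∫ r in Λ..b, f r) = ∫⁻ r in Ioc Λ b, ENNReal.ofReal (f r) :=
    fun hb hf hf0 => ofReal_intervalIntegral_eq_setLIntegral hb
      ((hf.mono Icc_subset_Ici_self).intervalIntegrable_of_Icc hb) fun r hr => hf0 r hr.1.le
  rw [setLIntegral_Ioi_eq_iSup_Ioc_add_natCast _ Λ (2 * Λ), ENNReal.mul_iSup]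
  refine iSup_le fun n => ?_
  have hR : 2 * Λ ≤ 2 * Λ + n := le_add_of_nonneg_right n.cast_nonneg
  have hΛR : Λ ≤ 2 * Λ + n := by linarith
  have hφw : ContinuousOn (fun r => r ^ p * φ r ^ 2) (Ici Λ) := hpow.mul (hφ.pow 2)
  have hψ'w : ContinuousOn (fun r => r ^ p * ψ' r ^ 2) (Ici Λ) := hpow.mul (hψ'.pow 2)
  have hφw0 : ∀ r ∈ Ici Λ, 0 ≤ r ^ p * φ r ^ 2 := fun r hr =>
    mul_nonneg (hweight r hr) (sq_nonneg _)
  have hψ'w0 : ∀ r ∈ Ici Λ, 0 ≤ r ^ p * ψ' r ^ 2 := fun r hr =>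
    mul_nonneg (hweight r hr) (sq_nonneg _)
  rw [← hofReal hΛR hφw hφw0, ← ENNReal.ofReal_mul (sq_nonneg _)]
  calc ENNReal.ofReal ((1 - p) ^ 2 * ∫ r in Λ..2 * Λ + n, r ^ p * φ r ^ 2)
      ≤ ENNReal.ofReal (hardyFarConst Λ * ((∫ r in Λ..2 * Λ + n, r ^ p * ψ' r ^ 2) +
          ∫ r in Λ..2 * Λ, φ r ^ 2)) :=
        ENNReal.ofReal_le_ofReal (hardy_far_intervalIntegral_le hΛ hp hR
          (hφ.mono Icc_subset_Ici_self) (hψ'.mono Icc_subset_Ici_self)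
          fun x hx => hderiv x hx.1)
    _ = ENNReal.ofReal (hardyFarConst Λ) *
        ((∫⁻ r in Ioc Λ (2 * Λ + n), ENNReal.ofReal (r ^ p * ψ' r ^ 2)) +
          ∫⁻ r in Ioc Λ (2 * Λ), ENNReal.ofReal (φ r ^ 2)) := by
      rw [ENNReal.ofReal_mul (hardyFarConst_pos hΛ).le,
        ENNReal.ofReal_add (intervalIntegral.integral_nonneg hΛR fun r hr => hψ'w0 r hr.1)
          (intervalIntegral.integral_nonneg (by linarith) fun r _ => sq_nonneg _),
        hofReal hΛR hψ'w hψ'w0,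
        hofReal (f := fun r => φ r ^ 2) (by linarith) (hφ.pow 2) fun r _ => sq_nonneg _]
    _ ≤ _ := by
      gcongr
      exact Ioc_subset_Ioi_self

/-- Far-region `r^p`-weighted Hardy inequality (one-dimensional form of Lemma 4.2, first
inequality): for `p ∈ [-1, 1)`, `φ` C¹ on `[Λ, ∞)` with
`liminf_{r→∞} r^{p-1}(rφ(r))² = 0`, and `ψ = rφ`,
`(1-p)² ∫_Λ^∞ r^p φ² dr ≤ C (∫_Λ^∞ r^p (ψ')² dr + ∫_Λ^{2Λ} φ² dr)`. -/
theorem stmt8 (Λ : ℝ) (hΛ : 0 < Λ) :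
    ∃ C : ℝ, 0 < C ∧ ∀ p : ℝ, p ∈ Set.Ico (-1 : ℝ) 1 →
      ∀ φ : ℝ → ℝ, ContDiffOn ℝ 1 φ (Set.Ici Λ) →
        Filter.liminf (fun r : ℝ => r ^ (p - 1) * (r * φ r) ^ 2) Filter.atTop = 0 →
        ENNReal.ofReal ((1 - p) ^ 2) *
            ∫⁻ r in Set.Ioi Λ, ENNReal.ofReal (r ^ p * (φ r) ^ 2) ≤
          ENNReal.ofReal C *
            ((∫⁻ r in Set.Ioi Λ,
                ENNReal.ofReal (r ^ p * (deriv (fun ρ => ρ * φ ρ) r) ^ 2)) +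
              ∫⁻ r in Set.Ioc Λ (2 * Λ), ENNReal.ofReal ((φ r) ^ 2)) := by
  refine ⟨hardyFarConst Λ, hardyFarConst_pos hΛ, fun p hp φ hφ _ => ?_⟩
  have hψ : ContDiffOn ℝ 1 (fun ρ => ρ * φ ρ) (Ici Λ) := contDiffOn_id.mul hφ
  have hderiv : ∀ x ∈ Ioi Λ, HasDerivAt (fun ρ => ρ * φ ρ)
      (derivWithin (fun ρ => ρ * φ ρ) (Ici Λ) x) x := fun x hx =>
    hψ.hasDerivAt_derivWithin_Ici hx
  have hweighted : ∫⁻ r in Ioi Λ, ENNReal.ofReal (r ^ p * deriv (fun ρ => ρ * φ ρ) r ^ 2) =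
      ∫⁻ r in Ioi Λ, ENNReal.ofReal (r ^ p * derivWithin (fun ρ => ρ * φ ρ) (Ici Λ) r ^ 2) :=
    setLIntegral_congr_fun measurableSet_Ioi fun r hr => by rw [(hderiv r hr).deriv]
  rw [hweighted]
  exact hardy_far_lintegral_le hΛ (Ico_subset_Icc_self hp) hφ.continuousOn
    (hψ.continuousOn_derivWithin (uniqueDiffOn_Ici Λ) le_rfl) hderiv
end

section
/- Let M > 0 and r₋₁ ∈ (M, 2M). There exists a constant C > 0, depending only on M and r₋₁, such that for every p ∈ [0, 2] and every C¹ function φ : (M, r₋₁] → ℝ, writing ψ(r) := r·φ(r), one has ∫_M^{r₋₁} (r − M)^{2−p} r^{−2} φ'(r)² dr ≤ C · ( ∫_M^{r₋₁} (r − M)^{2−p} r^{−2} ψ'(r)² dr + ∫_M^{r₋₁} (r − M)^{−p} r² φ(r)² dr ), where the inequality is understood in [0, ∞]. -/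
/-!
Since `ψ' = φ + r φ'`, the inequality holds pointwise: `r φ' = ψ' - φ` gives
`(r - M)² r⁻² φ'² ≤ 2 (r - M)² r⁻⁴ (ψ'² + φ²)`, and on `(M, r₁]` one has `r⁻² ≤ M⁻²` and
`(r - M)² r⁻⁶ ≤ (r₁ - M)² M⁻⁶`, which turns the two terms into the two integrands on the right.
-/

open Real Set MeasureTheory

lemma sub_sq_div_sq_mul_sq_le {M r r₁ : ℝ} (hM : 0 < M) (hMr : M ≤ r) (hr : r ≤ r₁) (x y : ℝ) :
    (r - M) ^ 2 / r ^ 2 * x ^ 2 ≤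
      (2 / M ^ 2 + 2 * (r₁ - M) ^ 2 / M ^ 6) *
        ((r - M) ^ 2 / r ^ 2 * (y + r * x) ^ 2 + r ^ 2 * y ^ 2) := by
  have hr0 : 0 < r := hM.trans_le hMr
  have hA : 0 ≤ (r - M) ^ 2 / r ^ 2 * (y + r * x) ^ 2 := by positivity
  have hB : 0 ≤ r ^ 2 * y ^ 2 := by positivity
  have hinv : 1 / r ^ 2 ≤ 1 / M ^ 2 := by gcongr
  have hratio : (r - M) ^ 2 / r ^ 6 ≤ (r₁ - M) ^ 2 / M ^ 6 := by gcongr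
  calc (r - M) ^ 2 / r ^ 2 * x ^ 2 = (r - M) ^ 2 / r ^ 4 * (r * x) ^ 2 := by
        field_simp
    _ ≤ (r - M) ^ 2 / r ^ 4 * (2 * ((y + r * x) ^ 2 + (-y) ^ 2)) := by
        gcongr
        convert add_sq_le (a := y + r * x) (b := -y) using 2
        ring
    _ = 2 * (1 / r ^ 2) * ((r - M) ^ 2 / r ^ 2 * (y + r * x) ^ 2) +
          2 * ((r - M) ^ 2 / r ^ 6) * (r ^ 2 * y ^ 2) := by
        field_simp
    _ ≤ 2 * (1 / M ^ 2) * ((r - M) ^ 2 / r ^ 2 * (y + r * x) ^ 2) +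
          2 * ((r₁ - M) ^ 2 / M ^ 6) * (r ^ 2 * y ^ 2) := by
        gcongr
    _ = 2 / M ^ 2 * ((r - M) ^ 2 / r ^ 2 * (y + r * x) ^ 2) +
          2 * (r₁ - M) ^ 2 / M ^ 6 * (r ^ 2 * y ^ 2) := by
        ring
    _ ≤ _ := by
        have h₁ : 0 ≤ 2 / M ^ 2 := by positivity
        have h₂ : 0 ≤ 2 * (r₁ - M) ^ 2 / M ^ 6 := by positivity
        nlinarith [mul_nonneg h₁ hB, mul_nonneg h₂ hA]

lemma rpow_sub_mul_rpow_neg_two {M r p : ℝ} (hMr : M < r) (hr : 0 < r) :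
    (r - M) ^ (2 - p) * r ^ (-2 : ℝ) = (r - M) ^ (-p) * ((r - M) ^ 2 / r ^ 2) := by
  rw [show 2 - p = -p + 2 by ring, rpow_add (sub_pos.2 hMr), rpow_neg hr.le, rpow_two, rpow_two]
  ring

lemma hardy_integrand_le {M r₁ r : ℝ} (hM : 0 < M) (hr : r ∈ Ioc M r₁) (p : ℝ) (φ : ℝ → ℝ) :
    (r - M) ^ (2 - p) * r ^ (-2 : ℝ) * deriv φ r ^ 2 ≤
      (2 / M ^ 2 + 2 * (r₁ - M) ^ 2 / M ^ 6) *
        ((r - M) ^ (2 - p) * r ^ (-2 : ℝ) * deriv (fun ρ => ρ * φ ρ) r ^ 2 +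
          (r - M) ^ (-p) * r ^ 2 * φ r ^ 2) := by
  have hr0 : 0 < r := hM.trans hr.1
  have hw : 0 ≤ (r - M) ^ (-p) := rpow_nonneg (sub_nonneg.2 hr.1.le) _
  rw [rpow_sub_mul_rpow_neg_two hr.1 hr0]
  by_cases hφ : DifferentiableAt ℝ φ r
  · have hψ : deriv (fun ρ => ρ * φ ρ) r = φ r + r * deriv φ r := by
      rw [deriv_fun_mul differentiableAt_fun_id hφ]
      simp
    rw [hψ]
    have := mul_le_mul_of_nonneg_left
      (sub_sq_div_sq_mul_sq_le hM hr.1.le hr.2 (deriv φ r) (φ r)) hw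
    linarith
  · rw [deriv_zero_of_not_differentiableAt hφ]
    simp only [ne_eq, OfNat.ofNat_ne_zero, not_false_eq_true, zero_pow, mul_zero]
    positivity

lemma lintegral_le_mul_add_of_ae_le {α : Type*} [MeasurableSpace α] {μ : Measure α}
    {f g h : α → ENNReal} {c : ENNReal} (hc : c ≠ ⊤) (hg : AEMeasurable g μ)
    (hle : ∀ᵐ x ∂μ, f x ≤ c * (g x + h x)) :
    ∫⁻ x, f x ∂μ ≤ c * (∫⁻ x, g x ∂μ + ∫⁻ x, h x ∂μ) :=
  calc ∫⁻ x, f x ∂μ ≤ ∫⁻ x, c * (g x + h x) ∂μ := lintegral_mono_ae hle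
    _ = c * (∫⁻ x, g x ∂μ + ∫⁻ x, h x ∂μ) := by
      rw [lintegral_const_mul' _ _ hc, lintegral_add_left' hg]

theorem stmt9_general (M r₁ : ℝ) (hM : 0 < M) :
    ∃ C : ℝ, 0 < C ∧ ∀ p : ℝ, p ∈ Set.Icc (0 : ℝ) 2 →
      ∀ φ : ℝ → ℝ, ContDiffOn ℝ 1 φ (Set.Ioc M r₁) →
        ∫⁻ r in Set.Ioc M r₁,
            ENNReal.ofReal ((r - M) ^ (2 - p) * r ^ (-2 : ℝ) * (deriv φ r) ^ 2) ≤
          ENNReal.ofReal C *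
            ((∫⁻ r in Set.Ioc M r₁,
                ENNReal.ofReal
                  ((r - M) ^ (2 - p) * r ^ (-2 : ℝ) * (deriv (fun ρ => ρ * φ ρ) r) ^ 2)) +
              ∫⁻ r in Set.Ioc M r₁,
                ENNReal.ofReal ((r - M) ^ (-p) * r ^ 2 * (φ r) ^ 2)) := by
  refine ⟨2 / M ^ 2 + 2 * (r₁ - M) ^ 2 / M ^ 6, by positivity, fun p _ φ _ => ?_⟩
  apply lintegral_le_mul_add_of_ae_le ENNReal.ofReal_ne_top
  · have := measurable_deriv (fun ρ => ρ * φ ρ)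
    exact Measurable.aemeasurable (by fun_prop)
  · filter_upwards [ae_restrict_mem measurableSet_Ioc] with r hr
    have hr0 : 0 < r := hM.trans hr.1
    have hrM : 0 ≤ r - M := sub_nonneg.2 hr.1.le
    rw [← ENNReal.ofReal_add (by positivity) (by positivity),
      ← ENNReal.ofReal_mul (by positivity)]
    exact ENNReal.ofReal_le_ofReal (hardy_integrand_le hM hr p φ)

/-- Near-horizon Hardy inequality controlling `(r-M)^{-p}|∂_u φ|²` by `(r-M)^{-p}|∂_u ψ|²`
plus the zeroth-order term (one-dimensional form of the second inequality of Lemma 4.1):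
for `p ∈ [0, 2]` and `ψ = rφ`,
`∫_M^{r₋₁} (r-M)^{2-p} r^{-2} (φ')² dr ≤ C (∫_M^{r₋₁} (r-M)^{2-p} r^{-2} (ψ')² dr
  + ∫_M^{r₋₁} (r-M)^{-p} r² φ² dr)`. -/
theorem stmt9 (M r₁ : ℝ) (hM : 0 < M) (h1 : M < r₁) (h2 : r₁ < 2 * M) :
    ∃ C : ℝ, 0 < C ∧ ∀ p : ℝ, p ∈ Set.Icc (0 : ℝ) 2 →
      ∀ φ : ℝ → ℝ, ContDiffOn ℝ 1 φ (Set.Ioc M r₁) →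
        ∫⁻ r in Set.Ioc M r₁,
            ENNReal.ofReal ((r - M) ^ (2 - p) * r ^ (-2 : ℝ) * (deriv φ r) ^ 2) ≤
          ENNReal.ofReal C *
            ((∫⁻ r in Set.Ioc M r₁,
                ENNReal.ofReal
                  ((r - M) ^ (2 - p) * r ^ (-2 : ℝ) * (deriv (fun ρ => ρ * φ ρ) r) ^ 2)) +
              ∫⁻ r in Set.Ioc M r₁,
                ENNReal.ofReal ((r - M) ^ (-p) * r ^ 2 * (φ r) ^ 2)) :=
  stmt9_general M r₁ hM
end
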